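/- arXiv:1711.10048 — 3 statements merged into one kernel-verified Lean document; each statement's English description precedes it below -/
import Mathlib

section
/- Let δ > 1, χ > 0 and C > 0 be real numbers, and set A₁ = (1/(δ+1))·((δ+1)/δ)^(−δ)·((δ−1)/δ)^(δ+1). Then the function H(y) = y + A₁·y^(−δ)·χ^(δ+1)·C has minimum value ((δ−1)/δ)·C^(1/(δ+1))·χ on (0,∞); that is, ((δ−1)/δ)·C^(1/(δ+1))·χ is the least element of the image {H(y) : y > 0}. -/
/-!
Weighted AM-GM with weights `δ/(δ+1)` and `1/(δ+1)` gives `δ x + x^(-δ) ≥ δ + 1` for `x > 0`.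
Rescaling `y = y₀ x` with `y₀^(δ+1) = δK` turns this into `y + K y^(-δ) ≥ (δ+1)/δ · y₀`,
with equality at `y = y₀`. For `K = A₁ χ^(δ+1) C` one has `δ A₁ = ((δ-1)/(δ+1))^(δ+1)`,
so `y₀ = (δ-1)/(δ+1) · χ · C^(1/(δ+1))`.
-/

open Real Set

theorem add_one_le_mul_add_rpow_neg {δ x : ℝ} (hδ : 0 < δ) (hx : 0 < x) :
    δ + 1 ≤ δ * x + x ^ (-δ) := by
  have hδ1 : 0 < δ + 1 := by linarith
  have amgm := geom_mean_le_arith_mean2_weighted (w₁ := δ / (δ + 1)) (w₂ := 1 / (δ + 1))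
    (by positivity) (by positivity) hx.le (rpow_nonneg hx.le (-δ)) (by field_simp)
  have hprod : x ^ (δ / (δ + 1)) * (x ^ (-δ)) ^ (1 / (δ + 1)) = 1 := by
    rw [← rpow_mul hx.le, ← rpow_add hx, neg_mul, mul_one_div, add_neg_cancel, rpow_zero]
  rw [hprod] at amgm
  have := mul_le_mul_of_nonneg_left amgm hδ1.le
  field_simp at this
  linarith

theorem isLeast_image_add_mul_rpow_neg {δ K : ℝ} (hδ : 0 < δ) (hK : 0 < K) :
    IsLeast ((fun y : ℝ => y + K * y ^ (-δ)) '' Ioi 0)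
      ((δ + 1) / δ * (δ * K) ^ (1 / (δ + 1))) := by
  set y₀ := (δ * K) ^ (1 / (δ + 1))
  have hy₀ : 0 < y₀ := by positivity
  -- `y₀` solves the critical-point equation `y ^ (δ + 1) = δ K`
  have hcrit : K * y₀ ^ (-δ) = y₀ / δ := by
    have hpow : y₀ ^ (δ + 1) = δ * K := by
      rw [← rpow_mul (by positivity), one_div_mul_cancel (by positivity), rpow_one]
    have : 0 < y₀ ^ δ := by positivity
    rw [rpow_add_one hy₀.ne'] at hpow
    rw [rpow_neg hy₀.le]
    field_simp
    linarith
  refine ⟨⟨y₀, hy₀, ?_⟩, ?_⟩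
  · simp only [hcrit]
    field_simp
  · rintro _ ⟨y, hy, rfl⟩
    have hscale : K * y ^ (-δ) = y₀ / δ * (y / y₀) ^ (-δ) := by
      rw [div_rpow hy.le hy₀.le, ← hcrit]
      field_simp
    have := add_one_le_mul_add_rpow_neg hδ (div_pos hy hy₀)
    calc (δ + 1) / δ * y₀ = y₀ / δ * (δ + 1) := by ring
      _ ≤ y₀ / δ * (δ * (y / y₀) + (y / y₀) ^ (-δ)) := by gcongr
      _ = y + K * y ^ (-δ) := by rw [hscale]; field_simp

theorem mul_A₁_eq_rpow {δ : ℝ} (hδ : 1 < δ) :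
    δ * (1 / (δ + 1) * ((δ + 1) / δ) ^ (-δ) * ((δ - 1) / δ) ^ (δ + 1))
      = ((δ - 1) / (δ + 1)) ^ (δ + 1) := by
  have hδ0 : 0 < δ := by linarith
  have hδ1 : 0 < δ + 1 := by linarith
  have hsplit : (δ - 1) / (δ + 1) = δ / (δ + 1) * ((δ - 1) / δ) := by field_simp
  have hinv : δ / (δ + 1) * ((δ + 1) / δ) ^ (-δ) = (δ / (δ + 1)) ^ (δ + 1) := by
    rw [← inv_div, inv_rpow (by positivity), rpow_neg (by positivity), ← mul_inv,
      ← rpow_one_add' (by positivity) (by linarith), add_comm, ← inv_rpow (by positivity),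
      inv_div]
  rw [hsplit, mul_rpow (by positivity) (by bound), ← hinv]
  ring

/-- The function `H(y) = y + A₁·y^(−δ)·χ^(δ+1)·C` attains minimum value
`((δ−1)/δ)·C^(1/(δ+1))·χ` on `(0,∞)`. -/
theorem stmt_0 (δ χ C : ℝ) (hδ : 1 < δ) (hχ : 0 < χ) (hC : 0 < C)
    (A₁ : ℝ) (hA₁ : A₁ = 1 / (δ + 1) * ((δ + 1) / δ) ^ (-δ) * ((δ - 1) / δ) ^ (δ + 1)) :
    IsLeast
      ((fun y : ℝ => y + A₁ * y ^ (-δ) * χ ^ (δ + 1) * C) '' Ioi (0 : ℝ))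
      ((δ - 1) / δ * C ^ (1 / (δ + 1)) * χ) := by
  have hδ0 : 0 < δ := by linarith
  have hδ1 : 0 < δ + 1 := by linarith
  have hroot : (δ * (A₁ * χ ^ (δ + 1) * C)) ^ (1 / (δ + 1))
      = (δ - 1) / (δ + 1) * χ * C ^ (1 / (δ + 1)) := by
    have hq : 0 ≤ (δ - 1) / (δ + 1) * χ := by bound
    rw [← mul_assoc, ← mul_assoc, hA₁, mul_A₁_eq_rpow hδ,
      ← mul_rpow (by bound) hχ.le, mul_rpow (by positivity) hC.le,
      one_div, rpow_rpow_inv hq hδ1.ne']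
  have hfun : (fun y : ℝ => y + A₁ * y ^ (-δ) * χ ^ (δ + 1) * C)
      = fun y => y + A₁ * χ ^ (δ + 1) * C * y ^ (-δ) := by
    funext y; ring
  have hmin : (δ - 1) / δ * C ^ (1 / (δ + 1)) * χ
      = (δ + 1) / δ * ((δ - 1) / (δ + 1) * χ * C ^ (1 / (δ + 1))) := by
    field_simp
  rw [hfun, hmin, ← hroot]
  exact isLeast_image_add_mul_rpow_neg hδ0 (by rw [hA₁]; positivity)
end

section
/- Let δ > 1, χ > 0 and C > 0 be real numbers, and set A₁ = (1/(δ+1))·((δ+1)/δ)^(−δ)·((δ−1)/δ)^(δ+1). Then for every y > 0 one has y + A₁·y^(−δ)·χ^(δ+1)·C ≥ ((δ−1)/δ)·C^(1/(δ+1))·χ. -/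
open Real Set

/-- Bernoulli's inequality, rearranged. -/
lemma Real.mul_le_sub_one_add_rpow {p x : ℝ} (hp : 1 ≤ p) (hx : 0 ≤ x) :
    p * x ≤ p - 1 + x ^ p := by
  have := one_add_mul_self_le_rpow_one_add (s := x - 1) (by linarith) hp
  rw [add_sub_cancel] at this
  linarith

/- The substitution `x = δ s / y` turns this into Bernoulli's inequality for the exponent `δ + 1`;
equality holds at `y = δ s`. -/
lemma Real.add_one_mul_le_add_rpow_mul_rpow_neg {δ s y : ℝ} (hδ : 0 < δ) (hs : 0 ≤ s)
    (hy : 0 < y) : (δ + 1) * s ≤ y + δ ^ δ * s ^ (δ + 1) * y ^ (-δ) := by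
  have hx : 0 ≤ δ * s / y := by positivity
  have bernoulli := Real.mul_le_sub_one_add_rpow (p := δ + 1) (by linarith) hx
  rw [div_rpow (by positivity) hy.le, mul_rpow hδ.le hs, rpow_add_one hδ.ne',
    rpow_add_one hy.ne', add_sub_cancel_right] at bernoulli
  have hyδ : 0 < y ^ δ := rpow_pos_of_pos hy δ
  rw [rpow_neg hy.le]
  calc (δ + 1) * s = y / δ * ((δ + 1) * (δ * s / y)) := by field_simp
    _ ≤ y / δ * (δ + δ ^ δ * δ * s ^ (δ + 1) / (y ^ δ * y)) := by gcongr
    _ = y + δ ^ δ * s ^ (δ + 1) * (y ^ δ)⁻¹ := by field_simp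

/-- For every `y > 0`, `y + A₁·y^(−δ)·χ^(δ+1)·C ≥ ((δ−1)/δ)·C^(1/(δ+1))·χ`. -/
theorem stmt_1 (δ χ C : ℝ) (hδ : 1 < δ) (hχ : 0 < χ) (hC : 0 < C)
    (A₁ : ℝ) (hA₁ : A₁ = 1 / (δ + 1) * ((δ + 1) / δ) ^ (-δ) * ((δ - 1) / δ) ^ (δ + 1)) :
    ∀ y : ℝ, 0 < y →
      (δ - 1) / δ * C ^ (1 / (δ + 1)) * χ ≤ y + A₁ * y ^ (-δ) * χ ^ (δ + 1) * C := by
  intro y hy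
  have hδ0 : 0 < δ := by linarith
  have hδ1 : 0 < δ + 1 := by linarith
  set s := (δ - 1) / δ * C ^ (1 / (δ + 1)) * χ / (δ + 1) with hs
  have hs_pow : δ ^ δ * s ^ (δ + 1) = A₁ * χ ^ (δ + 1) * C := by
    have hC_pow : (C ^ (1 / (δ + 1))) ^ (δ + 1) = C := by
      rw [← rpow_mul hC.le, one_div_mul_cancel hδ1.ne', rpow_one]
    have hδ1_pow : (δ + 1) ^ (δ + 1) = (δ + 1) ^ δ * (δ + 1) := rpow_add_one hδ1.ne' δ
    have hδ1_pos : 0 < (δ + 1) ^ δ := rpow_pos_of_pos hδ1 δ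
    rw [hs, hA₁, div_rpow (by positivity) hδ1.le, mul_rpow (by positivity) hχ.le,
      mul_rpow (by bound) (by positivity), hC_pow, hδ1_pow, rpow_neg (by positivity),
      div_rpow hδ1.le hδ0.le]
    field_simp
  calc (δ - 1) / δ * C ^ (1 / (δ + 1)) * χ = (δ + 1) * s := by rw [hs]; field_simp
    _ ≤ y + δ ^ δ * s ^ (δ + 1) * y ^ (-δ) :=
      Real.add_one_mul_le_add_rpow_mul_rpow_neg hδ0 (by positivity) hy
    _ = y + A₁ * y ^ (-δ) * χ ^ (δ + 1) * C := by rw [hs_pow]; ring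
end

section
/- Let l > 1, χ > 0 and C > 0 be real numbers. Set A₁ = (1/(l+1))·((l+1)/l)^(−l)·((l−1)/l)^(l+1) and λ₀ = (A₁·C·l)^(1/(l+1))·χ. Then: (i) for all real u ≥ 0 and z ≥ 0, ((l−1)/l)·χ·u^l·z ≤ λ₀·u^(l+1) + A₁·λ₀^(−l)·χ^(l+1)·z^(l+1); and (ii) λ₀ + A₁·λ₀^(−l)·χ^(l+1)·C = ((l−1)/l)·C^(1/(l+1))·χ. -/
open Real

/-!
Young's inequality with exponents `(l + 1) / l` and `l + 1`, applied to `u ^ l` and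
`((l - 1) / l) χ z` with weight `λ`, gives (i) for every `λ > 0`, with remainder coefficient
`A₁ λ ^ (-l) χ ^ (l + 1)`. Since `A₁ l = ((l - 1) / (l + 1)) ^ (l + 1)`, the weight simplifies to
`λ₀ = ((l - 1) / (l + 1)) C ^ (1 / (l + 1)) χ`, for which the remainder term against `C` equals
`λ₀ / l`; the total is `((l + 1) / l) λ₀ = ((l - 1) / l) C ^ (1 / (l + 1)) χ`.
-/

theorem Real.young_inequality_of_nonneg_weighted {a b p q ε : ℝ} (ha : 0 ≤ a) (hb : 0 ≤ b)
    (hpq : p.HolderConjugate q) (hε : 0 < ε) :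
    a * b ≤ ε * a ^ p + (p * ε) ^ (-(q / p)) / q * b ^ q := by
  have hc : 0 < p * ε := mul_pos hpq.pos hε
  have young := young_inequality_of_nonneg (mul_nonneg (rpow_nonneg hc.le (1 / p)) ha)
    (mul_nonneg (rpow_nonneg hc.le (-(1 / p))) hb) hpq
  have hprod : (p * ε) ^ (1 / p) * a * ((p * ε) ^ (-(1 / p)) * b) = a * b := by
    rw [mul_mul_mul_comm, ← rpow_add hc, add_neg_cancel, rpow_zero, one_mul]
  have hfst : ((p * ε) ^ (1 / p) * a) ^ p / p = ε * a ^ p := by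
    rw [mul_rpow (rpow_nonneg hc.le _) ha, ← rpow_mul hc.le, one_div_mul_cancel hpq.ne_zero,
      rpow_one]
    field_simp [hpq.ne_zero]
  have hsnd : ((p * ε) ^ (-(1 / p)) * b) ^ q / q = (p * ε) ^ (-(q / p)) / q * b ^ q := by
    rw [mul_rpow (rpow_nonneg hc.le _) hb, ← rpow_mul hc.le]
    ring_nf
  rwa [hprod, hfst, hsnd] at young

noncomputable def absorptionConst (l : ℝ) : ℝ :=
  1 / (l + 1) * ((l + 1) / l) ^ (-l) * ((l - 1) / l) ^ (l + 1)

theorem mul_rpow_le_absorption {l χ lam u z : ℝ} (hl : 1 ≤ l) (hχ : 0 ≤ χ) (hlam : 0 < lam)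
    (hu : 0 ≤ u) (hz : 0 ≤ z) :
    (l - 1) / l * χ * u ^ l * z ≤
      lam * u ^ (l + 1) + absorptionConst l * lam ^ (-l) * χ ^ (l + 1) * z ^ (l + 1) := by
  have hl0 : 0 < l := by linarith
  have hr : 0 ≤ (l - 1) / l := div_nonneg (by linarith) hl0.le
  have hpq : ((l + 1) / l).HolderConjugate (l + 1) := by
    rw [holderConjugate_iff]
    constructor
    · rw [lt_div_iff₀ hl0]; linarith
    · field_simp
  have young := young_inequality_of_nonneg_weighted (rpow_nonneg hu l)
    (mul_nonneg (mul_nonneg hr hχ) hz) hpq hlam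
  have hexp : (l + 1) / ((l + 1) / l) = l := by field_simp
  rw [← rpow_mul hu, mul_div_cancel₀ _ hl0.ne', hexp,
    mul_rpow (by positivity) hlam.le, mul_rpow (mul_nonneg hr hχ) hz, mul_rpow hr hχ] at young
  calc (l - 1) / l * χ * u ^ l * z = u ^ l * ((l - 1) / l * χ * z) := by ring
    _ ≤ _ := young
    _ = _ := by unfold absorptionConst; ring

theorem absorptionConst_mul_self {l : ℝ} (hl : 1 ≤ l) :
    absorptionConst l * l = ((l - 1) / (l + 1)) ^ (l + 1) := by
  have hl0 : 0 < l := by linarith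
  have hinv : ((l + 1) / l) ^ (-l) = (l / (l + 1)) ^ l := by
    rw [rpow_neg (by positivity), ← inv_rpow (by positivity), inv_div]
  calc absorptionConst l * l
      = (l / (l + 1)) ^ l * (l / (l + 1)) * ((l - 1) / l) ^ (l + 1) := by
        rw [absorptionConst, hinv]; field_simp
    _ = (l / (l + 1) * ((l - 1) / l)) ^ (l + 1) := by
        rw [← rpow_add_one (by positivity), mul_rpow (by positivity) (by bound)]
    _ = ((l - 1) / (l + 1)) ^ (l + 1) := by field_simp

/-- The condition `K ^ (l + 1) = A C l` makes the weight `K χ` and the Young remainder it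
produces stand in the ratio `l : 1`. -/
theorem add_absorption_eq {l χ K A C : ℝ} (hl : 0 < l) (hχ : 0 < χ) (hK : 0 < K)
    (hKA : K ^ (l + 1) = A * C * l) :
    K * χ + A * (K * χ) ^ (-l) * χ ^ (l + 1) * C = (l + 1) / l * (K * χ) := by
  have hAC : A * C = K ^ (l + 1) / l := by rw [hKA]; field_simp
  have hKK : K ^ (l + 1) * K ^ (-l) = K := by rw [← rpow_add hK]; norm_num
  have hχχ : χ ^ (-l) * χ ^ (l + 1) = χ := by rw [← rpow_add hχ]; norm_num
  calc K * χ + A * (K * χ) ^ (-l) * χ ^ (l + 1) * C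
      = K * χ + A * C / K ^ (l + 1) * (K ^ (l + 1) * K ^ (-l)) * (χ ^ (-l) * χ ^ (l + 1)) := by
        rw [mul_rpow hK.le hχ.le]; field_simp
    _ = (l + 1) / l * (K * χ) := by rw [hAC, hKK, hχχ]; field_simp

/-- Key absorption step: with the optimal weight `λ₀ = (A₁·C·l)^(1/(l+1))·χ`,
(i) `((l−1)/l)·χ·u^l·z ≤ λ₀·u^(l+1) + A₁·λ₀^(−l)·χ^(l+1)·z^(l+1)` for all `u, z ≥ 0`, and
(ii) `λ₀ + A₁·λ₀^(−l)·χ^(l+1)·C = ((l−1)/l)·C^(1/(l+1))·χ`. -/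
theorem stmt_6 (l χ C : ℝ) (hl : 1 < l) (hχ : 0 < χ) (hC : 0 < C)
    (A₁ : ℝ) (hA₁ : A₁ = 1 / (l + 1) * ((l + 1) / l) ^ (-l) * ((l - 1) / l) ^ (l + 1))
    (lam₀ : ℝ) (hlam₀ : lam₀ = (A₁ * C * l) ^ (1 / (l + 1)) * χ) :
    (∀ u z : ℝ, 0 ≤ u → 0 ≤ z →
        (l - 1) / l * χ * u ^ l * z ≤
          lam₀ * u ^ (l + 1) + A₁ * lam₀ ^ (-l) * χ ^ (l + 1) * z ^ (l + 1)) ∧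
      lam₀ + A₁ * lam₀ ^ (-l) * χ ^ (l + 1) * C = (l - 1) / l * C ^ (1 / (l + 1)) * χ := by
  change A₁ = absorptionConst l at hA₁
  have hl1 : 0 < l + 1 := by linarith
  have hACl : A₁ * C * l = ((l - 1) / (l + 1)) ^ (l + 1) * C := by
    rw [mul_right_comm, hA₁, absorptionConst_mul_self hl.le]
  set K := (A₁ * C * l) ^ (1 / (l + 1)) with hKdef
  have hK : K = (l - 1) / (l + 1) * C ^ (1 / (l + 1)) := by
    rw [hKdef, hACl, mul_rpow (by bound) hC.le, ← rpow_mul (by bound), mul_one_div_cancel hl1.ne',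
      rpow_one]
  have hKpos : 0 < K := by rw [hK]; bound
  have hKpow : K ^ (l + 1) = A₁ * C * l := by
    rw [hKdef, one_div, rpow_inv_rpow (by rw [hACl]; positivity) hl1.ne']
  refine ⟨fun u z hu hz => ?_, ?_⟩
  · rw [hA₁]
    exact mul_rpow_le_absorption hl.le hχ.le (hlam₀ ▸ mul_pos hKpos hχ) hu hz
  · rw [hlam₀, add_absorption_eq (by linarith) hχ hKpos hKpow, hK]
    field_simp
end
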